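/- arXiv:1711.06876 — 3 statements merged into one kernel-verified Lean document; each statement's English description precedes it below -/
import Mathlib

section
/- Let $q$ be a homogeneous polynomial of degree $d$ on $\mathbb{R}^n$, and let $S^{n-1}_\rho$ denote the sphere of radius $\rho > 0$ centered at the origin. Then $\int_{S^{n-1}_\rho} q\, dS_\rho = \frac{\rho^2}{d(d+n-2)} \int_{S^{n-1}_\rho} \Delta q\, dS_\rho$, provided $d \geq 1$. -/
open MeasureTheory Metric

/-- The surface measure on the sphere of radius `ρ` centered at the origin of `ℝⁿ`,
realized as a measure on `ℝⁿ`: the pushforward under `x ↦ ρ • x` of the canonical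
surface measure on the unit sphere, scaled by `ρ^(n-1)`. -/
noncomputable def sphereSurfaceMeasure (n : ℕ) (ρ : ℝ) :
    Measure (EuclideanSpace ℝ (Fin n)) :=
  ENNReal.ofReal (ρ ^ (n - 1)) •
    Measure.map (fun x : sphere (0 : EuclideanSpace ℝ (Fin n)) 1 =>
      ρ • (x : EuclideanSpace ℝ (Fin n)))
      (volume : Measure (EuclideanSpace ℝ (Fin n))).toSphere

/-- The Laplacian of a multivariate polynomial. -/
noncomputable def polyLaplacian {n : ℕ} (q : MvPolynomial (Fin n) ℝ) :
    MvPolynomial (Fin n) ℝ :=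
  ∑ i : Fin n, MvPolynomial.pderiv i (MvPolynomial.pderiv i q)


open Real Filter


open MeasureTheory Metric Real Filter

noncomputable def gaussW (t : ℝ) : ℝ := Real.exp (-(2⁻¹) * t ^ 2)

noncomputable def gaussM (k : ℕ) : ℝ := ∫ t : ℝ, t ^ k * gaussW t

lemma integrable_pow_gaussW (k : ℕ) : Integrable (fun t : ℝ => t ^ k * gaussW t) := by
  have h := integrable_rpow_mul_exp_neg_mul_sq (b := 2⁻¹) (by norm_num) (s := (k : ℝ))
    (neg_one_lt_zero.trans_le (Nat.cast_nonneg k))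
  simpa [gaussW, Real.rpow_natCast] using h

lemma hasDerivAt_gaussW (t : ℝ) : HasDerivAt gaussW (-t * gaussW t) t := by
  have h : HasDerivAt (fun t : ℝ => -(2⁻¹) * t ^ 2) (-(2⁻¹) * (2 * t)) t := by
    simpa using ((hasDerivAt_pow 2 t).const_mul (-(2⁻¹) : ℝ))
  have := h.exp
  refine this.congr_deriv ?_
  unfold gaussW; ring

lemma gaussM_rec (k : ℕ) : gaussM (k + 2) = (k + 1) * gaussM k := by
  have hderiv : ∀ t : ℝ, HasDerivAt (fun t : ℝ => t ^ (k + 1) * gaussW t)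
      ((k + 1 : ℝ) * t ^ k * gaussW t - t ^ (k + 2) * gaussW t) t := by
    intro t
    have h := (hasDerivAt_pow (k + 1) t).mul (hasDerivAt_gaussW t)
    refine h.congr_deriv ?_
    push_cast
    ring
  have hint : Integrable (fun t : ℝ =>
      (k + 1 : ℝ) * t ^ k * gaussW t - t ^ (k + 2) * gaussW t) := by
    have h1 := (integrable_pow_gaussW k).const_mul ((k : ℝ) + 1)
    have h2 := integrable_pow_gaussW (k + 2)
    simpa [mul_assoc, Pi.sub_def] using h1.sub h2
  have h0 := integral_eq_zero_of_hasDerivAt_of_integrable hderiv hint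
    (integrable_pow_gaussW (k + 1))
  rw [integral_sub (by simpa [mul_assoc] using (integrable_pow_gaussW k).const_mul ((k : ℝ) + 1))
      (integrable_pow_gaussW (k + 2))] at h0
  have h1 : ∫ t : ℝ, (k + 1 : ℝ) * t ^ k * gaussW t = (k + 1 : ℝ) * gaussM k := by
    rw [gaussM, ← integral_const_mul]
    congr 1; ext t; ring
  rw [h1] at h0
  have : (∫ t : ℝ, t ^ (k + 2) * gaussW t) = gaussM (k + 2) := rfl
  linarith [h0, this ▸ h0]

lemma gaussM_one : gaussM 1 = 0 := by
  have hderiv : ∀ t : ℝ, HasDerivAt (fun t : ℝ => -gaussW t) (t ^ 1 * gaussW t) t := by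
    intro t
    have := (hasDerivAt_gaussW t).neg
    refine this.congr_deriv ?_
    ring
  have h0 := integral_eq_zero_of_hasDerivAt_of_integrable hderiv (integrable_pow_gaussW 1)
    ((by simpa using integrable_pow_gaussW 0 : Integrable gaussW).neg)
  simpa [gaussM] using h0

lemma gaussM_step (a : ℕ) :
    (a : ℝ) * ((a - 1 : ℕ) : ℝ) * gaussM (a - 1 - 1) + gaussM a = gaussM (a + 2) := by
  match a with
  | 0 => simp [gaussM_rec 0]
  | 1 =>
    have h : gaussM 3 = 2 * gaussM 1 := by
      have := gaussM_rec 1; norm_num at this; convert this using 2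
    simp [h, gaussM_one]
  | (b + 2) =>
    have h1 := gaussM_rec b
    have h2 := gaussM_rec (b + 2)
    rw [show b + 2 - 1 - 1 = b by omega, show (b + 2 - 1 : ℕ) = b + 1 by omega]
    rw [h2, h1]
    push_cast
    ring

noncomputable def gaussC (k : ℕ) : ℝ := ∫ r in Set.Ioi (0 : ℝ), r ^ k * gaussW r

lemma continuous_pow_gaussW (k : ℕ) : Continuous (fun t : ℝ => t ^ k * gaussW t) := by
  unfold gaussW; fun_prop

lemma tendsto_pow_gaussW (k : ℕ) :
    Tendsto (fun t : ℝ => t ^ k * gaussW t) atTop (nhds 0) := by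
  have h := rpow_mul_exp_neg_mul_sq_isLittleO_exp_neg (b := 2⁻¹) (by norm_num) (k : ℝ)
  have h2 : (fun t : ℝ => t ^ k * gaussW t) =o[atTop] fun x => Real.exp (-(1/2) * x) := by
    refine h.congr' ?_ (Eventually.of_forall fun _ => rfl)
    filter_upwards with t
    rw [Real.rpow_natCast]
    rfl
  have htend : Tendsto (fun x : ℝ => Real.exp (-(1/2) * x)) atTop (nhds 0) := by
    have h1 : Tendsto (fun x : ℝ => -(1/2) * x) atTop atBot := by
      apply Tendsto.const_mul_atTop_of_neg (by norm_num : (-(1/2):ℝ) < 0) tendsto_id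
    exact Real.tendsto_exp_atBot.comp h1
  exact h2.tendsto_zero_of_tendsto htend

lemma gaussC_rec (k : ℕ) : gaussC (k + 2) = (k + 1) * gaussC k := by
  have hderiv : ∀ t ∈ Set.Ioi (0:ℝ), HasDerivAt (fun t : ℝ => t ^ (k + 1) * gaussW t)
      ((k + 1 : ℝ) * t ^ k * gaussW t - t ^ (k + 2) * gaussW t) t := by
    intro t _
    have h := (hasDerivAt_pow (k + 1) t).mul (hasDerivAt_gaussW t)
    refine h.congr_deriv ?_
    push_cast
    ring
  have hint : IntegrableOn (fun t : ℝ =>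
      (k + 1 : ℝ) * t ^ k * gaussW t - t ^ (k + 2) * gaussW t) (Set.Ioi 0) := by
    have h1 := ((integrable_pow_gaussW k).const_mul ((k : ℝ) + 1)).sub
      (integrable_pow_gaussW (k + 2))
    exact (h1.congr (Eventually.of_forall fun t => by show _ = _; push_cast; simp only [Pi.sub_apply]; ring)).integrableOn
  have h0 := integral_Ioi_of_hasDerivAt_of_tendsto
    ((continuous_pow_gaussW (k+1)).continuousWithinAt) hderiv hint (tendsto_pow_gaussW (k+1))
  rw [integral_sub (((integrable_pow_gaussW k).const_mul ((k:ℝ)+1)).integrableOn.congr_fun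
      (fun t _ => by push_cast; ring) measurableSet_Ioi)
      (integrable_pow_gaussW (k + 2)).integrableOn] at h0
  have h1 : ∫ t in Set.Ioi (0:ℝ), (k + 1 : ℝ) * t ^ k * gaussW t = (k + 1 : ℝ) * gaussC k := by
    rw [gaussC, ← integral_const_mul]
    refine setIntegral_congr_fun measurableSet_Ioi fun t _ => by ring
  rw [h1] at h0
  have h2 : (∫ t in Set.Ioi (0:ℝ), t ^ (k + 2) * gaussW t) = gaussC (k + 2) := rfl
  have h3 : gaussW 0 = 1 := by simp [gaussW]
  rw [h2, h3] at h0
  push_cast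
  simp only [zero_pow (Nat.succ_ne_zero k), zero_mul, mul_one, sub_zero] at h0
  linarith

lemma gaussC_pos (k : ℕ) : 0 < gaussC k := by
  rw [gaussC, setIntegral_pos_iff_support_of_nonneg_ae]
  · have hsub : Set.Ioi (0:ℝ) ⊆ (Function.support fun r : ℝ => r ^ k * gaussW r) ∩ Set.Ioi 0 := by
      intro r hr
      refine ⟨?_, hr⟩
      have h0r : (0:ℝ) < r := hr
      have hpos : 0 < r ^ k * gaussW r := by
        have := Real.exp_pos (-(2⁻¹) * r ^ 2)
        unfold gaussW
        positivity
      exact Function.mem_support.2 (ne_of_gt hpos)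
    calc (0:ENNReal) < volume (Set.Ioi (0:ℝ)) := by simp [Real.volume_Ioi]
    _ ≤ _ := measure_mono hsub
  · filter_upwards [ae_restrict_mem measurableSet_Ioi] with r hr
    have h0r : (0:ℝ) < r := hr
    have := Real.exp_pos (-(2⁻¹) * r ^ 2)
    unfold gaussW
    positivity
  · exact (integrable_pow_gaussW k).integrableOn

open MvPolynomial in
noncomputable def polyLaplacian' {n : ℕ} (q : MvPolynomial (Fin n) ℝ) :
    MvPolynomial (Fin n) ℝ :=
  ∑ i : Fin n, MvPolynomial.pderiv i (MvPolynomial.pderiv i q)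

namespace SphereAux

open MvPolynomial

variable {n : ℕ}

/-- Gaussian integral of a polynomial over `Fin n → ℝ`. -/
noncomputable def gaussGP (p : MvPolynomial (Fin n) ℝ) : ℝ :=
  ∫ x : Fin n → ℝ, MvPolynomial.eval x p * ∏ i, gaussW (x i)

lemma integrand_monomial (s : Fin n →₀ ℕ) (c : ℝ) (x : Fin n → ℝ) :
    MvPolynomial.eval x (monomial s c) * ∏ i, gaussW (x i)
      = c * ∏ i, (x i ^ s i * gaussW (x i)) := by
  rw [eval_monomial, Finsupp.prod_pow, Finset.prod_mul_distrib]
  ring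

lemma integrable_monomial_gauss (s : Fin n →₀ ℕ) (c : ℝ) :
    Integrable (fun x : Fin n → ℝ =>
      MvPolynomial.eval x (monomial s c) * ∏ i, gaussW (x i)) := by
  simp_rw [integrand_monomial]
  exact (Integrable.fintype_prod (f := fun i (t : ℝ) => t ^ s i * gaussW t)
    fun i => integrable_pow_gaussW (s i)).const_mul c

lemma gaussGP_monomial (s : Fin n →₀ ℕ) (c : ℝ) :
    gaussGP (monomial s c) = c * ∏ i, gaussM (s i) := by
  unfold gaussGP
  simp_rw [integrand_monomial]
  rw [integral_const_mul, integral_fintype_prod_volume_eq_prod (f := fun i (t : ℝ) => t ^ s i * gaussW t)]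
  rfl

lemma integrable_gauss (p : MvPolynomial (Fin n) ℝ) :
    Integrable (fun x : Fin n → ℝ => MvPolynomial.eval x p * ∏ i, gaussW (x i)) := by
  have hp : p = ∑ s ∈ p.support, monomial s (coeff s p) := (support_sum_monomial_coeff p).symm
  rw [hp]
  have : ∀ x : Fin n → ℝ,
      MvPolynomial.eval x (∑ s ∈ p.support, monomial s (coeff s p)) * ∏ i, gaussW (x i)
        = ∑ s ∈ p.support, MvPolynomial.eval x (monomial s (coeff s p)) * ∏ i, gaussW (x i) := by
    intro x
    rw [map_sum, Finset.sum_mul]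
  simp_rw [this]
  exact integrable_finset_sum _ fun s _ => integrable_monomial_gauss s (coeff s p)

lemma gaussGP_sum {ι : Type*} (A : Finset ι) (f : ι → MvPolynomial (Fin n) ℝ) :
    gaussGP (∑ i ∈ A, f i) = ∑ i ∈ A, gaussGP (f i) := by
  unfold gaussGP
  have : ∀ x : Fin n → ℝ,
      MvPolynomial.eval x (∑ i ∈ A, f i) * ∏ j, gaussW (x j)
        = ∑ i ∈ A, MvPolynomial.eval x (f i) * ∏ j, gaussW (x j) := by
    intro x
    rw [map_sum, Finset.sum_mul]
  simp_rw [this]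
  exact integral_finset_sum A fun i _ => integrable_gauss (f i)

/-- The polynomial `∑ i, X i ^ 2`. -/
noncomputable def sqNormPoly (n : ℕ) : MvPolynomial (Fin n) ℝ := ∑ i, X i ^ 2

lemma prod_gaussM_update (s : Fin n →₀ ℕ) (i : Fin n) (t : Fin n →₀ ℕ)
    (hti : ∀ j, j ≠ i → t j = s j) :
    (∏ j, gaussM (t j)) = gaussM (t i) * ∏ j ∈ Finset.univ.erase i, gaussM (s j) := by
  rw [← Finset.mul_prod_erase Finset.univ _ (Finset.mem_univ i)]
  congr 1
  exact Finset.prod_congr rfl fun j hj => by rw [hti j (Finset.ne_of_mem_erase hj)]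

lemma lap_monomial (s : Fin n →₀ ℕ) (c : ℝ) :
    polyLaplacian' (monomial s c)
      = ∑ i, monomial (s - Finsupp.single i 1 - Finsupp.single i 1)
          (c * (s i : ℝ) * ((s i - 1 : ℕ) : ℝ)) := by
  unfold polyLaplacian'
  refine Finset.sum_congr rfl fun i _ => ?_
  rw [pderiv_monomial, pderiv_monomial]
  congr 2
  simp [Finsupp.tsub_apply]

lemma key_monomial (s : Fin n →₀ ℕ) (c : ℝ) :
    gaussGP (polyLaplacian' (monomial s c)) + n * gaussGP (monomial s c)
      = gaussGP (sqNormPoly n * monomial s c) := by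
  have hlap : gaussGP (polyLaplacian' (monomial s c))
      = ∑ i, c * (s i : ℝ) * ((s i - 1 : ℕ) : ℝ)
          * (gaussM (s i - 1 - 1) * ∏ j ∈ Finset.univ.erase i, gaussM (s j)) := by
    rw [lap_monomial, gaussGP_sum]
    refine Finset.sum_congr rfl fun i _ => ?_
    rw [gaussGP_monomial]
    rw [prod_gaussM_update s i _ (fun j hj => by
      simp [Finsupp.tsub_apply, Finsupp.single_apply, (Ne.symm hj : ¬ i = j)])]
    have ht : ((s - Finsupp.single i 1 - Finsupp.single i 1 : Fin n →₀ ℕ)) i = s i - 1 - 1 := by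
      simp [Finsupp.tsub_apply]
    rw [ht]
  have hmul : gaussGP (sqNormPoly n * monomial s c)
      = ∑ i, c * (gaussM (s i + 2) * ∏ j ∈ Finset.univ.erase i, gaussM (s j)) := by
    rw [sqNormPoly, Finset.sum_mul, gaussGP_sum]
    refine Finset.sum_congr rfl fun i _ => ?_
    rw [X_pow_eq_monomial, monomial_mul, one_mul, gaussGP_monomial]
    rw [prod_gaussM_update s i _ (fun j hj => by
      simp [Finsupp.add_apply, Finsupp.single_apply, (Ne.symm hj : ¬ i = j)])]
    simp [Finsupp.add_apply, Finsupp.single_apply, add_comm]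
  have hmid : (n : ℝ) * gaussGP (monomial s c)
      = ∑ i : Fin n, c * (gaussM (s i) * ∏ j ∈ Finset.univ.erase i, gaussM (s j)) := by
    rw [gaussGP_monomial]
    have : ∀ i : Fin n, c * (gaussM (s i) * ∏ j ∈ Finset.univ.erase i, gaussM (s j))
        = c * ∏ j, gaussM (s j) := by
      intro i
      rw [Finset.mul_prod_erase Finset.univ (fun j => gaussM (s j)) (Finset.mem_univ i)]
    simp_rw [this]
    rw [Finset.sum_const, Finset.card_univ, Fintype.card_fin, nsmul_eq_mul]
  rw [hlap, hmid, hmul, ← Finset.sum_add_distrib]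
  refine Finset.sum_congr rfl fun i _ => ?_
  have hstep := gaussM_step (s i)
  rw [← hstep]
  ring

end SphereAux

namespace SphereAux
open MvPolynomial
variable {n : ℕ}

lemma polyLaplacian'_sum {ι : Type*} (A : Finset ι) (f : ι → MvPolynomial (Fin n) ℝ) :
    polyLaplacian' (∑ i ∈ A, f i) = ∑ i ∈ A, polyLaplacian' (f i) := by
  unfold polyLaplacian'
  simp_rw [map_sum]
  rw [Finset.sum_comm]

lemma key_identity (q : MvPolynomial (Fin n) ℝ) :
    gaussGP (polyLaplacian' q) + n * gaussGP q = gaussGP (sqNormPoly n * q) := by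
  conv_lhs => rw [← support_sum_monomial_coeff q]
  conv_rhs => rw [← support_sum_monomial_coeff q]
  rw [polyLaplacian'_sum, Finset.mul_sum, gaussGP_sum, gaussGP_sum, gaussGP_sum,
    Finset.mul_sum, ← Finset.sum_add_distrib]
  exact Finset.sum_congr rfl fun s _ => key_monomial s (coeff s q)

lemma degree_eq_sum_univ (s : Fin n →₀ ℕ) : s.degree = ∑ i, s i := by
  rw [Finsupp.degree]
  exact Finset.sum_subset (Finset.subset_univ _)
    (fun i _ hi => Finsupp.notMem_support_iff.1 hi)

lemma degree_of_mem_support {q : MvPolynomial (Fin n) ℝ} {m : ℕ} (hq : q.IsHomogeneous m)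
    {s : Fin n →₀ ℕ} (hs : s ∈ q.support) : s.degree = m := by
  rw [Finsupp.degree_eq_weight_one]
  exact hq (mem_support_iff.mp hs)

lemma eval_homog_smul {q : MvPolynomial (Fin n) ℝ} {m : ℕ} (hq : q.IsHomogeneous m)
    (c : ℝ) (x : Fin n → ℝ) :
    MvPolynomial.eval (fun i => c * x i) q = c ^ m * MvPolynomial.eval x q := by
  rw [eval_eq, eval_eq, Finset.mul_sum]
  refine Finset.sum_congr rfl fun s hs => ?_
  have hdeg : ∑ i ∈ s.support, s i = m := by
    have := degree_of_mem_support hq hs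
    rwa [Finsupp.degree] at this
  calc coeff s q * ∏ i ∈ s.support, (c * x i) ^ s i
      = coeff s q * ((∏ i ∈ s.support, c ^ s i) * ∏ i ∈ s.support, x i ^ s i) := by
        rw [← Finset.prod_mul_distrib]
        simp_rw [mul_pow]
    _ = c ^ m * (coeff s q * ∏ i ∈ s.support, x i ^ s i) := by
        rw [Finset.prod_pow_eq_pow_sum, hdeg]
        ring

lemma isHomog_pderiv {q : MvPolynomial (Fin n) ℝ} {m : ℕ} (hq : q.IsHomogeneous m) (i : Fin n) :
    (pderiv i q).IsHomogeneous (m - 1) := by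
  conv_lhs => rw [← support_sum_monomial_coeff q]
  rw [map_sum]
  refine IsHomogeneous.sum _ _ _ fun s hs => ?_
  rw [pderiv_monomial]
  by_cases h : s i = 0
  · have hc : coeff s q * (s i : ℝ) = 0 := by simp [h]
    rw [hc, monomial_zero]
    exact isHomogeneous_zero _ _ _
  · refine isHomogeneous_monomial _ ?_
    have hdeg : s.degree = m := degree_of_mem_support hq hs
    rw [degree_eq_sum_univ] at hdeg ⊢
    have hpt : ∀ j, (s - Finsupp.single i 1 : Fin n →₀ ℕ) j
        = s j - (Finsupp.single i 1 : Fin n →₀ ℕ) j := fun j => Finsupp.tsub_apply _ _ _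
    simp_rw [hpt]
    rw [Finset.sum_tsub_distrib _ (fun j _ => by
      rcases eq_or_ne i j with rfl | hij
      · simpa [Finsupp.single_apply] using Nat.one_le_iff_ne_zero.mpr h
      · simp [Finsupp.single_apply, hij])]
    have hsing : ∑ j, (Finsupp.single i 1 : Fin n →₀ ℕ) j = 1 := by
      simp [Finsupp.single_apply]
    rw [hsing, hdeg]

lemma isHomog_lap {q : MvPolynomial (Fin n) ℝ} {d : ℕ} (hq : q.IsHomogeneous d) :
    (polyLaplacian' q).IsHomogeneous (d - 2) := by
  unfold polyLaplacian'
  refine IsHomogeneous.sum _ _ _ fun i _ => ?_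
  have h := isHomog_pderiv (isHomog_pderiv hq i) i
  rwa [show (d - 1 - 1) = d - 2 by omega] at h

lemma lap_eq_zero_of_degree_one {q : MvPolynomial (Fin n) ℝ} (hq : q.IsHomogeneous 1) :
    polyLaplacian' q = 0 := by
  conv_lhs => rw [← support_sum_monomial_coeff q]
  rw [polyLaplacian'_sum]
  refine Finset.sum_eq_zero fun s hs => ?_
  rw [lap_monomial]
  refine Finset.sum_eq_zero fun i _ => ?_
  have hle : s i ≤ 1 := by
    have h1 := Finsupp.le_degree i s
    rwa [degree_of_mem_support hq hs] at h1
  have : (s i : ℝ) * ((s i - 1 : ℕ) : ℝ) = 0 := by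
    have h01 : s i = 0 ∨ s i = 1 := by omega
    rcases h01 with h | h <;> simp [h]
  rw [mul_assoc, this, mul_zero, monomial_zero]

lemma isHomog_sqNormPoly : (sqNormPoly n).IsHomogeneous 2 := by
  refine IsHomogeneous.sum _ _ _ fun i _ => ?_
  simpa using (isHomogeneous_X ℝ i).pow 2

end SphereAux

namespace SphereAux
open MvPolynomial
variable {n : ℕ}

lemma gaussW_norm (x : EuclideanSpace ℝ (Fin n)) : gaussW ‖x‖ = ∏ i, gaussW (x i) := by
  unfold gaussW
  rw [EuclideanSpace.norm_eq, Real.sq_sqrt (by positivity), ← Real.exp_sum]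
  congr 1
  rw [Finset.mul_sum]
  refine Finset.sum_congr rfl fun i _ => ?_
  rw [Real.norm_eq_abs, sq_abs]

/-- Gaussian integral over Euclidean space. -/
noncomputable def gaussGE (p : MvPolynomial (Fin n) ℝ) : ℝ :=
  ∫ x : EuclideanSpace ℝ (Fin n), MvPolynomial.eval (fun i => x i) p * gaussW ‖x‖

lemma gaussGE_eq_gaussGP (p : MvPolynomial (Fin n) ℝ) : gaussGE p = gaussGP p := by
  have hmp := (EuclideanSpace.volume_preserving_symm_measurableEquiv_toLp (Fin n)).symm
    ((MeasurableEquiv.toLp 2 (Fin n → ℝ)).symm)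
  rw [gaussGE, ← hmp.integral_comp'
    (g := fun x : EuclideanSpace ℝ (Fin n) => MvPolynomial.eval (fun i => x i) p * gaussW ‖x‖)]
  unfold gaussGP
  refine integral_congr_ae (Filter.Eventually.of_forall fun y => ?_)
  have hcoord : ∀ i, (((MeasurableEquiv.toLp 2 (Fin n → ℝ)).symm).symm y) i = y i := fun i => rfl
  show MvPolynomial.eval (fun i => (((MeasurableEquiv.toLp 2 (Fin n → ℝ)).symm).symm y) i) p
      * gaussW ‖((MeasurableEquiv.toLp 2 (Fin n → ℝ)).symm).symm y‖
    = MvPolynomial.eval y p * ∏ i, gaussW (y i)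
  rw [gaussW_norm]
  rfl

/-- Integral over the unit sphere w.r.t. the canonical surface measure. -/
noncomputable def unitSphInt (p : MvPolynomial (Fin n) ℝ) : ℝ :=
  ∫ ω : sphere (0 : EuclideanSpace ℝ (Fin n)) 1,
    MvPolynomial.eval (fun i => (ω : EuclideanSpace ℝ (Fin n)) i) p
      ∂(volume : Measure (EuclideanSpace ℝ (Fin n))).toSphere

lemma gaussGP_polar (hn : 1 ≤ n) (p : MvPolynomial (Fin n) ℝ) (m : ℕ) (hp : p.IsHomogeneous m) :
    gaussGP p = unitSphInt p * gaussC (m + (n - 1)) := by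
  classical
  haveI : Nontrivial (EuclideanSpace ℝ (Fin n)) := by
    refine ⟨EuclideanSpace.single (⟨0, hn⟩ : Fin n) (1:ℝ), 0, fun h => ?_⟩
    have := congrFun (congrArg (fun z : EuclideanSpace ℝ (Fin n) => (z : Fin n → ℝ)) h)
      (⟨0, hn⟩ : Fin n)
    simp [EuclideanSpace.single_apply] at this
  rw [← gaussGE_eq_gaussGP, gaussGE]
  set E := EuclideanSpace ℝ (Fin n)
  set F : E → ℝ := fun x => MvPolynomial.eval (fun i => x i) p * gaussW ‖x‖ with hF
  have step1 : (∫ x : E, F x) = ∫ x : ({(0:E)}ᶜ : Set E), F x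
      ∂((volume : Measure E).comap Subtype.val) := by
    rw [integral_subtype_comap (measurableSet_singleton (0:E)).compl F,
      MeasureTheory.restrict_compl_singleton]
  set g : sphere (0:E) 1 × Set.Ioi (0:ℝ) → ℝ := fun y => F ((y.2 : ℝ) • (y.1 : E)) with hg
  have step2 : (∫ x : ({(0:E)}ᶜ : Set E), F x ∂((volume : Measure E).comap Subtype.val))
      = ∫ y, g y ∂(((volume : Measure E).toSphere).prod
          (MeasureTheory.Measure.volumeIoiPow (Module.finrank ℝ E - 1))) := by
    rw [← (MeasureTheory.Measure.measurePreserving_homeomorphUnitSphereProd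
      (volume : Measure E)).integral_comp (Homeomorph.measurableEmbedding _) g]
    refine integral_congr_ae (Filter.Eventually.of_forall fun x => ?_)
    have hx0 : (x : E) ≠ 0 := x.2
    show F x = g (homeomorphUnitSphereProd E x)
    rw [hg]
    simp only [homeomorphUnitSphereProd_apply_fst_coe, homeomorphUnitSphereProd_apply_snd_coe]
    rw [smul_inv_smul₀ (norm_ne_zero_iff.2 hx0)]
  have step3 : ∀ y : sphere (0:E) 1 × Set.Ioi (0:ℝ),
      g y = (MvPolynomial.eval (fun i => (y.1 : E) i) p) * ((y.2:ℝ) ^ m * gaussW (y.2:ℝ)) := by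
    rintro ⟨ω, r⟩
    have hr : (0:ℝ) < r := r.2
    have hω : ‖(ω : E)‖ = 1 := mem_sphere_zero_iff_norm.1 ω.2
    rw [hg]
    have hcoord : (fun i => ((r:ℝ) • (ω : E)) i) = fun i => (r:ℝ) * (ω : E) i := by
      funext i; rfl
    show MvPolynomial.eval (fun i => ((r:ℝ) • (ω : E)) i) p * gaussW ‖(r:ℝ) • (ω : E)‖ = _
    rw [hcoord, eval_homog_smul hp, norm_smul, hω, mul_one, Real.norm_eq_abs,
      abs_of_pos hr]
    ring
  have step4 : (∫ y, g y ∂(((volume : Measure E).toSphere).prod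
          (MeasureTheory.Measure.volumeIoiPow (Module.finrank ℝ E - 1))))
      = unitSphInt p * ∫ r : Set.Ioi (0:ℝ), (r:ℝ) ^ m * gaussW (r:ℝ)
          ∂(MeasureTheory.Measure.volumeIoiPow (Module.finrank ℝ E - 1)) := by
    rw [integral_congr_ae (Filter.Eventually.of_forall step3)]
    exact integral_prod_mul
      (fun ω : sphere (0:E) 1 => MvPolynomial.eval (fun i => (ω : E) i) p)
      (fun r : Set.Ioi (0:ℝ) => (r:ℝ) ^ m * gaussW (r:ℝ))
  have step5 : (∫ r : Set.Ioi (0:ℝ), (r:ℝ) ^ m * gaussW (r:ℝ)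
        ∂(MeasureTheory.Measure.volumeIoiPow (Module.finrank ℝ E - 1)))
      = gaussC (m + (n - 1)) := by
    have hdim : Module.finrank ℝ E - 1 = n - 1 := by
      rw [finrank_euclideanSpace_fin]
    rw [hdim]
    simp only [MeasureTheory.Measure.volumeIoiPow, ENNReal.ofReal]
    rw [integral_withDensity_eq_integral_smul
      ((measurable_subtype_coe.pow_const _).real_toNNReal) (fun r : Set.Ioi (0:ℝ) => (r:ℝ) ^ m * gaussW (r:ℝ))]
    rw [integral_subtype_comap measurableSet_Ioi
      (fun a : ℝ => Real.toNNReal (a ^ (n-1)) • (a ^ m * gaussW a))]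
    rw [gaussC]
    refine setIntegral_congr_fun measurableSet_Ioi fun r hr => ?_
    have hrpos : (0:ℝ) < r := hr
    rw [NNReal.smul_def, Real.coe_toNNReal _ (pow_nonneg hrpos.le _), smul_eq_mul, pow_add]
    ring
  rw [step1, step2, step4, step5]
end SphereAux

namespace SphereAux
open MvPolynomial
variable {n : ℕ}

lemma polyLaplacian_eq (q : MvPolynomial (Fin n) ℝ) : polyLaplacian q = polyLaplacian' q := rfl

lemma continuous_evalE (p : MvPolynomial (Fin n) ℝ) :
    Continuous fun x : EuclideanSpace ℝ (Fin n) => MvPolynomial.eval (fun i => x i) p := by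
  have hcoord : ∀ i : Fin n, Continuous fun x : EuclideanSpace ℝ (Fin n) => x i := by
    intro i
    have := (EuclideanSpace.proj i : EuclideanSpace ℝ (Fin n) →L[ℝ] ℝ).continuous
    exact this
  have hrepr : (fun x : EuclideanSpace ℝ (Fin n) => MvPolynomial.eval (fun i => x i) p)
      = fun x : EuclideanSpace ℝ (Fin n) =>
          ∑ d ∈ p.support, coeff d p * ∏ i ∈ d.support, (x i) ^ d i :=
    funext fun x => eval_eq _ _
  rw [hrepr]
  exact continuous_finset_sum _ fun d _ =>
    continuous_const.mul (continuous_finset_prod _ fun i _ => (hcoord i).pow _)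

lemma integral_sphere_scale (ρ : ℝ) (hρ : 0 < ρ) (p : MvPolynomial (Fin n) ℝ) (m : ℕ)
    (hp : p.IsHomogeneous m) :
    (∫ x, MvPolynomial.eval (fun i => x i) p ∂(sphereSurfaceMeasure n ρ))
      = ρ ^ (n - 1) * (ρ ^ m * unitSphInt p) := by
  rw [sphereSurfaceMeasure, integral_smul_measure,
    integral_map (φ := fun x : sphere (0 : EuclideanSpace ℝ (Fin n)) 1 =>
        ρ • (x : EuclideanSpace ℝ (Fin n))) ((continuous_subtype_val.const_smul ρ).aemeasurable)
      (continuous_evalE p).aestronglyMeasurable,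
    ENNReal.toReal_ofReal (pow_nonneg hρ.le _)]
  congr 1
  have hpt : ∀ ω : sphere (0 : EuclideanSpace ℝ (Fin n)) 1,
      MvPolynomial.eval (fun i => (ρ • (ω : EuclideanSpace ℝ (Fin n))) i) p
        = ρ ^ m * MvPolynomial.eval (fun i => (ω : EuclideanSpace ℝ (Fin n)) i) p := by
    intro ω
    have h1 : (fun i => (ρ • (ω : EuclideanSpace ℝ (Fin n))) i)
        = fun i => ρ * (ω : EuclideanSpace ℝ (Fin n)) i := rfl
    rw [h1, eval_homog_smul hp]
  rw [integral_congr_ae (Filter.Eventually.of_forall hpt), integral_const_mul]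
  rfl

lemma eval_sqNormPoly_sphere (ω : sphere (0 : EuclideanSpace ℝ (Fin n)) 1) :
    MvPolynomial.eval (fun i => (ω : EuclideanSpace ℝ (Fin n)) i) (sqNormPoly n) = 1 := by
  have hω : ‖(ω : EuclideanSpace ℝ (Fin n))‖ = 1 := mem_sphere_zero_iff_norm.1 ω.2
  rw [EuclideanSpace.norm_eq] at hω
  have hsum : ∑ i, ‖(ω : EuclideanSpace ℝ (Fin n)) i‖ ^ 2 = 1 := Real.sqrt_eq_one.1 hω
  rw [sqNormPoly, map_sum]
  simp only [map_pow, eval_X]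
  calc ∑ i, (ω : EuclideanSpace ℝ (Fin n)) i ^ 2
      = ∑ i, ‖(ω : EuclideanSpace ℝ (Fin n)) i‖ ^ 2 :=
        Finset.sum_congr rfl fun i _ => by rw [Real.norm_eq_abs, sq_abs]
    _ = 1 := hsum

end SphereAux


open SphereAux MvPolynomial

/-- If `q` is a homogeneous polynomial of degree `d ≥ 1` on `ℝⁿ`, then
`∫_{S_ρ} q dS = ρ²/(d(d+n-2)) ∫_{S_ρ} Δq dS` for the surface measure on the sphere
of radius `ρ > 0`. -/
theorem stmt9 (n d : ℕ) (hd : 1 ≤ d) (ρ : ℝ) (hρ : 0 < ρ)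
    (q : MvPolynomial (Fin n) ℝ) (hq : q.IsHomogeneous d) :
    (∫ x, MvPolynomial.eval (fun i => x i) q ∂(sphereSurfaceMeasure n ρ))
      = ρ ^ 2 / (d * (d + n - 2 : ℝ))
        * ∫ x, MvPolynomial.eval (fun i => x i) (polyLaplacian q)
            ∂(sphereSurfaceMeasure n ρ) := by
  classical
  rcases Nat.eq_zero_or_pos n with hn0 | hnpos
  · subst hn0
    haveI hemp : IsEmpty (sphere (0 : EuclideanSpace ℝ (Fin 0)) 1) := by
      refine ⟨fun x => ?_⟩
      have hx := x.2
      rw [mem_sphere_zero_iff_norm, EuclideanSpace.norm_eq] at hx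
      simpa using hx
    have h0 : (volume : Measure (EuclideanSpace ℝ (Fin 0))).toSphere = 0 :=
      MeasureTheory.Measure.eq_zero_of_isEmpty _
    rw [sphereSurfaceMeasure, h0, Measure.map_zero, smul_zero]
    simp
  · have hn1 : 1 ≤ n := hnpos
    set A := unitSphInt q with hA
    have hq2 : (sqNormPoly n * q).IsHomogeneous (2 + d) := isHomog_sqNormPoly.mul hq
    have hGPq : gaussGP q = A * gaussC (d + (n - 1)) := gaussGP_polar hn1 q d hq
    have hGPT : gaussGP (sqNormPoly n * q)
        = unitSphInt (sqNormPoly n * q) * gaussC ((2 + d) + (n - 1)) :=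
      gaussGP_polar hn1 _ _ hq2
    have hTq : unitSphInt (sqNormPoly n * q) = A := by
      rw [hA, unitSphInt, unitSphInt]
      refine integral_congr_ae (Filter.Eventually.of_forall fun ω => ?_)
      show MvPolynomial.eval (fun i => (ω : EuclideanSpace ℝ (Fin n)) i) (sqNormPoly n * q)
        = MvPolynomial.eval (fun i => (ω : EuclideanSpace ℝ (Fin n)) i) q
      rw [map_mul, eval_sqNormPoly_sphere, one_mul]
    have hkey := key_identity (n := n) q
    have hJq := integral_sphere_scale ρ hρ q d hq
    rcases Nat.lt_or_ge d 2 with hd2 | hd2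
    · -- d = 1
      have hd1 : d = 1 := by omega
      subst hd1
      have hlap0 : polyLaplacian' q = 0 := lap_eq_zero_of_degree_one hq
      have hGP0 : gaussGP (polyLaplacian' q) = 0 := by
        rw [hlap0]
        unfold gaussGP
        simp
      rw [hGP0, hGPq, hGPT, hTq] at hkey
      rw [show 1 + (n - 1) = n by omega, show (2 + 1) + (n - 1) = n + 2 by omega,
        gaussC_rec n] at hkey
      have hA0 : A = 0 := by
        have hC := gaussC_pos n
        have h1 : A * gaussC n = 0 := by nlinarith [hkey]
        rcases mul_eq_zero.1 h1 with h | h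
        · exact h
        · exact absurd h (ne_of_gt hC)
      rw [hJq, ← hA, hA0, polyLaplacian_eq, hlap0]
      simp
    · -- d ≥ 2
      set k := (d - 2) + (n - 1) with hk
      have hlapHom : (polyLaplacian' q).IsHomogeneous (d - 2) := isHomog_lap hq
      have hGPlap : gaussGP (polyLaplacian' q)
          = unitSphInt (polyLaplacian' q) * gaussC k := gaussGP_polar hn1 _ _ hlapHom
      set B := unitSphInt (polyLaplacian' q) with hB
      have hdk : d + (n - 1) = k + 2 := by omega
      have hTk : (2 + d) + (n - 1) = k + 4 := by omega
      rw [hGPlap, hGPq, hGPT, hTq, hdk, hTk] at hkey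
      have hC2 : gaussC (k + 2) = ((k : ℝ) + 1) * gaussC k := by
        have := gaussC_rec k; push_cast at this ⊢; linarith
      have hC4 : gaussC (k + 4) = ((k : ℝ) + 3) * (((k : ℝ) + 1) * gaussC k) := by
        have h1 : gaussC (k + 4) = ((k + 2 : ℕ) + 1 : ℝ) * gaussC (k + 2) := by
          have := gaussC_rec (k + 2)
          rw [show k + 2 + 2 = k + 4 by omega] at this
          exact this
        rw [h1, hC2]
        push_cast
        ring
      have hCk := gaussC_pos k
      have hBval : B = ((k : ℝ) + 1) * (((k : ℝ) + 3) - n) * A := by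
        have hcancel : B * gaussC k = (((k : ℝ) + 1) * (((k : ℝ) + 3) - n) * A) * gaussC k := by
          rw [hC2, hC4] at hkey
          linear_combination hkey
        exact mul_right_cancel₀ (ne_of_gt hCk) hcancel
      have hkcast : (k : ℝ) = (d : ℝ) + n - 3 := by
        rw [hk]
        push_cast [Nat.cast_sub hd2, Nat.cast_sub hn1]
        ring
      have hBval' : B = ((d : ℝ) + n - 2) * (d : ℝ) * A := by
        rw [hBval, hkcast]
        ring
      have hJlap := integral_sphere_scale ρ hρ (polyLaplacian' q) (d - 2) hlapHom
      rw [polyLaplacian_eq, hJq, hJlap, ← hB, ← hA, hBval']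
      have hd2R : (2 : ℝ) ≤ (d : ℝ) := by exact_mod_cast hd2
      have hn1R : (1 : ℝ) ≤ (n : ℝ) := by exact_mod_cast hn1
      have hDd : (d : ℝ) ≠ 0 := by linarith
      have hDn : (d : ℝ) + n - 2 ≠ 0 := by linarith
      have hpow : ρ ^ d = ρ ^ (d - 2) * ρ ^ 2 := by
        rw [← pow_add]
        congr 1
        omega
      rw [hpow]
      field_simp
end

section
/- Fix integers or reals $n \geq 3$, $m \geq 0$, and let $c(m,n) = \frac{m+n-1}{(m+n-2)^2}$. For $\tau > 0$ and $x_0 \in \mathbb{R}^n$, define $\varphi_{x_0,\tau}(x) = \tau^{-\frac{n(m+n-2)}{4(m+n)}}\left(1 + \frac{c(m,n)}{\tau}|x-x_0|^2\right)^{-\frac{m+n-2}{2}}$. Then $\varphi_{x_0,\tau}$ satisfies the PDE $-\tau^{\frac{m}{m+n}}\Delta \varphi_{x_0,\tau} + \frac{m(m+n-1)}{m+n-2}\tau^{-\frac{n}{2(m+n)}}\varphi_{x_0,\tau}^{\frac{m+n}{m+n-2}} = \frac{(m+n)(m+n-1)}{m+n-2}\varphi_{x_0,\tau}^{\frac{m+n+2}{m+n-2}}$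 on $\mathbb{R}^n$. -/
/-!
Write `s = 1 + (c/τ)|x - x₀|²` and `p = -(m+n-2)/2`. Differentiating twice,
`Δ(A s^p) = 2Ap(c/τ) s^(p-2) (2(p-1)(s-1) + n s)`. For this `p`, each of the three terms of
the equation is `τ^E s^(p-2)` times a coefficient, with the same `E = -n(m+n+2)/(4(m+n))`:
the powers of `τ` are matched by the exponents of the statement, and `φ^((m+n)/(m+n-2))`
carries one extra factor `s`. Since `2(p-1) = -(m+n)` and `-2pc = (m+n-1)/(m+n-2)`, the
coefficients then add up to a constant in `s`, which is the right-hand side.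
-/

open MeasureTheory

/-- The Euclidean Laplacian of `f : ℝⁿ → ℝ`, as a sum of second directional
derivatives along the standard basis. -/
noncomputable def euclLaplacian {n : ℕ} (f : EuclideanSpace ℝ (Fin n) → ℝ)
    (x : EuclideanSpace ℝ (Fin n)) : ℝ :=
  ∑ i : Fin n,
    fderiv ℝ (fun y => fderiv ℝ f y (EuclideanSpace.single i 1)) x
      (EuclideanSpace.single i 1)

lemma hasFDerivAt_one_add_mul_norm_sub_sq {E : Type*} [NormedAddCommGroup E]
    [InnerProductSpace ℝ E] (x₀ : E) (b : ℝ) (y : E) :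
    HasFDerivAt (fun z => 1 + b * ‖z - x₀‖ ^ 2)
      (b • 2 • (innerSL ℝ (y - x₀)).comp (ContinuousLinearMap.id ℝ E)) y :=
  ((((hasFDerivAt_id y).sub_const x₀).norm_sq).const_mul b).const_add 1

lemma one_add_mul_norm_sub_sq_pos {E : Type*} [SeminormedAddCommGroup E] (x₀ : E) {b : ℝ}
    (hb : 0 ≤ b) (y : E) : 0 < 1 + b * ‖y - x₀‖ ^ 2 := by
  positivity

section Bubble

variable {ι : Type*} [Fintype ι] [DecidableEq ι] (x₀ : EuclideanSpace ℝ ι) {b : ℝ}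

lemma fderiv_bubble_apply_single (hb : 0 ≤ b) (A p : ℝ) (y : EuclideanSpace ℝ ι) (i : ι) :
    fderiv ℝ (fun z => A * (1 + b * ‖z - x₀‖ ^ 2) ^ p) y (EuclideanSpace.single i 1)
      = 2 * A * p * b * ((1 + b * ‖y - x₀‖ ^ 2) ^ (p - 1) * (y i - x₀ i)) := by
  rw [(((hasFDerivAt_one_add_mul_norm_sub_sq x₀ b y).rpow_const
    (Or.inl (one_add_mul_norm_sub_sq_pos x₀ hb y).ne')).const_mul A).fderiv]
  simp only [map_sub, ContinuousLinearMap.comp_id, smul_apply, sub_apply, coe_innerSL_apply,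
    EuclideanSpace.inner_single_right, Real.ringHom_apply, one_mul, nsmul_eq_mul,
    Nat.cast_ofNat, smul_eq_mul]
  ring

lemma fderiv_rpow_mul_coord_apply_single (hb : 0 ≤ b) (C q : ℝ) (x : EuclideanSpace ℝ ι)
    (i : ι) :
    fderiv ℝ (fun y => C * ((1 + b * ‖y - x₀‖ ^ 2) ^ q * (y i - x₀ i))) x
        (EuclideanSpace.single i 1)
      = C * ((1 + b * ‖x - x₀‖ ^ 2) ^ q
          + 2 * b * q * (1 + b * ‖x - x₀‖ ^ 2) ^ (q - 1) * (x i - x₀ i) ^ 2) := by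
  have hpow := (hasFDerivAt_one_add_mul_norm_sub_sq x₀ b x).rpow_const (p := q)
    (Or.inl (one_add_mul_norm_sub_sq_pos x₀ hb x).ne')
  have hcoord : HasFDerivAt (fun y : EuclideanSpace ℝ ι => y i - x₀ i)
      (EuclideanSpace.proj (𝕜 := ℝ) i) x :=
    (EuclideanSpace.proj (𝕜 := ℝ) i).hasFDerivAt.sub_const (x₀ i)
  have hprod : HasFDerivAt
      (fun y : EuclideanSpace ℝ ι => (1 + b * ‖y - x₀‖ ^ 2) ^ q * (y i - x₀ i)) _ x :=
    hpow.mul hcoord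
  rw [(hprod.const_mul C).fderiv]
  simp only [map_sub, ContinuousLinearMap.comp_id, smul_add, add_apply, smul_apply,
    PiLp.proj_apply, PiLp.single_eq_same, smul_eq_mul, mul_one, sub_apply, coe_innerSL_apply,
    EuclideanSpace.inner_single_right, Real.ringHom_apply, one_mul, nsmul_eq_mul,
    Nat.cast_ofNat]
  ring

lemma euclLaplacian_bubble {n : ℕ} (x₀ : EuclideanSpace ℝ (Fin n)) {b : ℝ} (hb : 0 ≤ b)
    (A p : ℝ) (x : EuclideanSpace ℝ (Fin n)) :
    euclLaplacian (fun y => A * (1 + b * ‖y - x₀‖ ^ 2) ^ p) x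
      = 2 * A * p * b * (1 + b * ‖x - x₀‖ ^ 2) ^ (p - 2)
          * (2 * (p - 1) * (b * ‖x - x₀‖ ^ 2) + n * (1 + b * ‖x - x₀‖ ^ 2)) := by
  set s := 1 + b * ‖x - x₀‖ ^ 2 with hs_def
  have hs : s ^ (p - 1) = s ^ (p - 2) * s := by
    rw [← Real.rpow_add_one (one_add_mul_norm_sub_sq_pos x₀ hb x).ne']
    congr 1
    ring
  have hnorm : ∑ i, (x i - x₀ i) ^ 2 = ‖x - x₀‖ ^ 2 := by
    simp [EuclideanSpace.real_norm_sq_eq]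
  simp only [euclLaplacian, fderiv_bubble_apply_single x₀ hb,
    fderiv_rpow_mul_coord_apply_single x₀ hb, ← hs_def]
  rw [← Finset.mul_sum, Finset.sum_add_distrib, ← Finset.mul_sum, hnorm]
  simp only [Finset.sum_const, Finset.card_univ, Fintype.card_fin, nsmul_eq_mul]
  rw [hs, sub_sub, one_add_one_eq_two]
  ring

end Bubble

lemma rpow_mul_rpow_rpow {τ s : ℝ} (hτ : 0 < τ) (hs : 0 < s) (a b q : ℝ) :
    (τ ^ a * s ^ b) ^ q = τ ^ (a * q) * s ^ (b * q) := by
  rw [Real.mul_rpow (by positivity) (by positivity), ← Real.rpow_mul hτ.le,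
    ← Real.rpow_mul hs.le]

section Exponents

variable {m N : ℝ}

lemma bubble_scale_rpow_laplacian_term (hmN : m + N ≠ 0) (hk : m + N - 2 ≠ 0) {τ : ℝ}
    (hτ : 0 < τ) :
    τ ^ (m / (m + N)) * τ ^ (-(N * (m + N - 2) / (4 * (m + N)))) * τ⁻¹
      = τ ^ (-(N * (m + N - 2) / (4 * (m + N))) * ((m + N + 2) / (m + N - 2))) := by
  rw [← Real.rpow_neg_one, ← Real.rpow_add hτ, ← Real.rpow_add hτ]
  congr 1
  field_simp
  ring

lemma bubble_scale_rpow_lower_order_term (hmN : m + N ≠ 0) (hk : m + N - 2 ≠ 0) {τ : ℝ}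
    (hτ : 0 < τ) :
    τ ^ (-(N / (2 * (m + N))))
        * τ ^ (-(N * (m + N - 2) / (4 * (m + N))) * ((m + N) / (m + N - 2)))
      = τ ^ (-(N * (m + N - 2) / (4 * (m + N))) * ((m + N + 2) / (m + N - 2))) := by
  rw [← Real.rpow_add hτ]
  congr 1
  field_simp
  ring

lemma bubble_profile_rpow_lower_order_term (hk : m + N - 2 ≠ 0) {s : ℝ} (hs : 0 < s) :
    s ^ (-(m + N - 2) / 2 * ((m + N) / (m + N - 2))) = s ^ (-(m + N - 2) / 2 - 2) * s := by
  rw [← Real.rpow_add_one hs.ne']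
  congr 1
  field_simp
  ring

lemma bubble_profile_rpow_critical_term (hk : m + N - 2 ≠ 0) (s : ℝ) :
    s ^ (-(m + N - 2) / 2 * ((m + N + 2) / (m + N - 2))) = s ^ (-(m + N - 2) / 2 - 2) := by
  congr 1
  field_simp
  ring

lemma bubble_coefficient_identity (hk : m + N - 2 ≠ 0) {c : ℝ}
    (hc : c = (m + N - 1) / (m + N - 2) ^ 2) (s : ℝ) :
    -(2 * (-(m + N - 2) / 2) * c)
        * (2 * (-(m + N - 2) / 2 - 1) * (s - 1) + N * s)
      + m * (m + N - 1) / (m + N - 2) * s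
      = (m + N) * (m + N - 1) / (m + N - 2) := by
  subst hc
  field_simp
  ring

end Exponents

/-- The standard bubble functions `φ_{x₀,τ}` solve the Yamabe-type PDE
`-τ^{m/(m+n)} Δφ + (m(m+n-1)/(m+n-2)) τ^{-n/(2(m+n))} φ^{(m+n)/(m+n-2)}
  = ((m+n)(m+n-1)/(m+n-2)) φ^{(m+n+2)/(m+n-2)}` on `ℝⁿ`. -/
theorem stmt11 (n : ℕ) (hn : 3 ≤ n) (m : ℝ) (hm : 0 ≤ m) (τ : ℝ) (hτ : 0 < τ)
    (x₀ : EuclideanSpace ℝ (Fin n)) (c : ℝ) (hc : c = (m + n - 1) / (m + n - 2) ^ 2)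
    (φ : EuclideanSpace ℝ (Fin n) → ℝ)
    (hφ : φ = fun x => τ ^ (-(n * (m + n - 2) / (4 * (m + n))))
      * (1 + c / τ * ‖x - x₀‖ ^ 2) ^ (-(m + n - 2) / 2)) :
    ∀ x : EuclideanSpace ℝ (Fin n),
      -τ ^ (m / (m + n)) * euclLaplacian φ x
        + m * (m + n - 1) / (m + n - 2) * τ ^ (-(n / (2 * (m + n))))
          * φ x ^ ((m + n) / (m + n - 2))
      = (m + n) * (m + n - 1) / (m + n - 2) * φ x ^ ((m + n + 2) / (m + n - 2)) := by
  intro x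
  have hn_real : (3 : ℝ) ≤ n := by exact_mod_cast hn
  have hk : (m + n - 2 : ℝ) ≠ 0 := by linarith
  have hmn : (m + n : ℝ) ≠ 0 := by linarith
  have hb : 0 ≤ c / τ := by
    rw [hc]
    exact div_nonneg (div_nonneg (by linarith) (sq_nonneg _)) hτ.le
  have hs := one_add_mul_norm_sub_sq_pos x₀ hb x
  have hΔ := euclLaplacian_bubble x₀ hb (τ ^ (-(n * (m + n - 2) / (4 * (m + n)))))
    (-(m + n - 2) / 2) x
  rw [← hφ] at hΔ
  rw [hΔ, hφ, rpow_mul_rpow_rpow hτ hs, rpow_mul_rpow_rpow hτ hs,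
    bubble_profile_rpow_lower_order_term hk hs, bubble_profile_rpow_critical_term hk]
  set p := -(m + n - 2) / 2
  set s := 1 + c / τ * ‖x - x₀‖ ^ 2
  set σ := s ^ (p - 2)
  set T := τ ^ (-(n * (m + n - 2) / (4 * (m + n))) * ((m + n + 2) / (m + n - 2)))
  linear_combination
    (-(2 * p * c) * σ * (2 * (p - 1) * (c / τ * ‖x - x₀‖ ^ 2) + n * s))
      * bubble_scale_rpow_laplacian_term hmn hk hτ
    + (m * (m + n - 1) / (m + n - 2) * σ * s) * bubble_scale_rpow_lower_order_term hmn hk hτ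
    + T * σ * bubble_coefficient_identity hk hc s
end

section
/- Define $A_5(m,n) = -\frac{(n-7)(n-2)}{n(2m+n-4)(2m+n-6)} + \frac{(m+n-1)(m+n-2)}{(m+n)^2(2m+n-2)^2} - \frac{(m+n-2)(n+8)}{n(m+n)(2m+n-2)(2m+n-4)} + \frac{m(m+n-1)(2m+2n-1)}{n(m+n)^2(2m+n-2)^2} - \frac{2m(m+n-1)}{n(m+n)(2m+n-2)(2m+n-4)}$. Then $A_5(m,n) \leq 0$ for all real $n \geq 7$ and $m \geq 0$. -/
/-!
Over the common denominator `n (m+n)² (2m+n-2)² (2m+n-4) (2m+n-6)`, which is positive, `A₅(m, n)`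
has a polynomial numerator. Substituting `n = 7 + t`, this numerator becomes the negative of a
polynomial in `m` and `t` all of whose coefficients are positive, so it is nonpositive for
`m, t ≥ 0`.
-/

noncomputable def A₅ (m n : ℝ) : ℝ :=
  -((n - 7) * (n - 2)) / (n * (2 * m + n - 4) * (2 * m + n - 6))
    + (m + n - 1) * (m + n - 2) / ((m + n) ^ 2 * (2 * m + n - 2) ^ 2)
    - (m + n - 2) * (n + 8) / (n * (m + n) * (2 * m + n - 2) * (2 * m + n - 4))
    + m * (m + n - 1) * (2 * m + 2 * n - 1) / (n * (m + n) ^ 2 * (2 * m + n - 2) ^ 2)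
    - 2 * m * (m + n - 1) / (n * (m + n) * (2 * m + n - 2) * (2 * m + n - 4))

namespace A₅

def negNumerator (m t : ℝ) : ℝ :=
  1995 + 9189 * t + 6683 * t ^ 2 + 2110 * t ^ 3 + 345 * t ^ 4 + 29 * t ^ 5 + t ^ 6
    + 5475 * m + 10788 * m * t + 5597 * m * t ^ 2 + 1282 * m * t ^ 3 + 140 * m * t ^ 4
    + 6 * m * t ^ 5
    + 3297 * m ^ 2 + 3917 * m ^ 2 * t + 1454 * m ^ 2 * t ^ 2 + 227 * m ^ 2 * t ^ 3
    + 13 * m ^ 2 * t ^ 4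
    + 676 * m ^ 3 + 512 * m ^ 3 * t + 136 * m ^ 3 * t ^ 2 + 12 * m ^ 3 * t ^ 3
    + 44 * m ^ 4 + 20 * m ^ 4 * t + 4 * m ^ 4 * t ^ 2

lemma negNumerator_nonneg {m t : ℝ} (hm : 0 ≤ m) (ht : 0 ≤ t) : 0 ≤ negNumerator m t := by
  unfold negNumerator
  positivity

lemma seven_add_eq {m t : ℝ} (hm : 0 ≤ m) (ht : 0 ≤ t) :
    A₅ m (7 + t) = -negNumerator m t /
      ((7 + t) * (m + 7 + t) ^ 2 * (2 * m + 5 + t) ^ 2 * (2 * m + 3 + t) * (2 * m + 1 + t)) := by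
  have h₁ : 7 + t ≠ 0 := by positivity
  have h₂ : m + 7 + t ≠ 0 := by positivity
  have h₃ : 2 * m + (7 + t) - 2 ≠ 0 := by linarith
  have h₄ : 2 * m + (7 + t) - 4 ≠ 0 := by linarith
  have h₅ : 2 * m + (7 + t) - 6 ≠ 0 := by linarith
  have h₆ : m + (7 + t) ≠ 0 := by linarith
  unfold A₅ negNumerator
  field_simp
  ring

theorem nonpos {m n : ℝ} (hm : 0 ≤ m) (hn : 7 ≤ n) : A₅ m n ≤ 0 := by
  obtain ⟨t, ht, rfl⟩ : ∃ t, 0 ≤ t ∧ n = 7 + t := ⟨n - 7, by linarith, by ring⟩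
  rw [seven_add_eq hm ht, neg_div]
  exact neg_nonpos.mpr (div_nonneg (negNumerator_nonneg hm ht) (by positivity))

end A₅

/-- The quantity `A₅(m,n)` from the proof of Theorem A is nonpositive for all real
`n ≥ 7`, `m ≥ 0`. -/
theorem stmt14 (n m : ℝ) (hn : 7 ≤ n) (hm : 0 ≤ m) :
    -((n - 7) * (n - 2)) / (n * (2 * m + n - 4) * (2 * m + n - 6))
      + (m + n - 1) * (m + n - 2) / ((m + n) ^ 2 * (2 * m + n - 2) ^ 2)
      - (m + n - 2) * (n + 8) / (n * (m + n) * (2 * m + n - 2) * (2 * m + n - 4))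
      + m * (m + n - 1) * (2 * m + 2 * n - 1) / (n * (m + n) ^ 2 * (2 * m + n - 2) ^ 2)
      - 2 * m * (m + n - 1) / (n * (m + n) * (2 * m + n - 2) * (2 * m + n - 4)) ≤ 0 :=
  A₅.nonpos hm hn
end
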